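/- arXiv:2004.08903 — 6 statements merged into one kernel-verified Lean document; each statement's English description precedes it below -/
import Mathlib

section
/- For every r with 0 ≤ r < 1, the inequality 4(1+k)r/(1-r)^2 ≤ 1 holds if and only if r ≤ 1/(2k+3+√((2k+3)^2-1)), where k ∈ [0,1). -/
theorem bohr_ineq_iff_ru (k r : ℝ) (hk0 : 0 ≤ k) (hk1 : k < 1)
    (hr0 : 0 ≤ r) (hr1 : r < 1) :
    4*(1+k)*r / (1-r)^2 ≤ 1 ↔ r ≤ 1 / (2*k + 3 + Real.sqrt ((2*k + 3)^2 - 1)) := by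
  set s := Real.sqrt ((2*k + 3)^2 - 1) with hs
  have hnn : (0:ℝ) ≤ (2*k+3)^2 - 1 := by nlinarith
  have hs0 : 0 ≤ s := Real.sqrt_nonneg _
  have hs2 : s^2 = (2*k+3)^2 - 1 := Real.sq_sqrt hnn
  have hpos : 0 < 2*k + 3 + s := by nlinarith
  have hinv : 1 / (2*k + 3 + s) = 2*k + 3 - s := by
    rw [div_eq_iff (ne_of_gt hpos)]; nlinarith
  have hden : 0 < (1-r)^2 := by nlinarith
  rw [div_le_one hden, hinv]
  constructor
  · intro h
    nlinarith [mul_nonneg hr0 hs0]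
  · intro h
    nlinarith [mul_nonneg hr0 hs0, sq_nonneg (r - (2*k+3-s))]
end

section
/- Let F(r) = 2(1+k)r/(1-r) + 2k·ln(1-r) − 1 for k ∈ (0,1]. Then F(0) = −1 < 0, F(1/3) = k·ln(4e/9) > 0, and F'(r) = (2+2kr)/(1-r)^2 > 0 on [0,1/3]; consequently the equation 2(1+k)r/(1-r) + 2k·ln(1-r) = 1 has a unique root r_c(k) in the interval (0,1/3). -/
/-! `F(r) = 2(1+k)r/(1-r) + 2k log(1-r) - 1` is strictly increasing on `[0, 1/3]`, since its
derivative `(2 + 2kr)/(1-r)^2` is positive there. As `F 0 = -1` and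
`F (1/3) = k (1 + 2 log (2/3)) = k log (4e/9) > 0` (because `e > 9/4`), the intermediate value
theorem gives a root in `(0, 1/3)` and strict monotonicity makes it unique. -/

open Real Set

theorem StrictMonoOn.existsUnique_mem_Ioo_eq {α δ : Type*} [ConditionallyCompleteLinearOrder α]
    [TopologicalSpace α] [OrderTopology α] [DenselyOrdered α] [LinearOrder δ] [TopologicalSpace δ]
    [OrderClosedTopology δ] {f : α → δ} {a b : α} {c : δ} (hab : a ≤ b)
    (hcont : ContinuousOn f (Icc a b)) (hmono : StrictMonoOn f (Icc a b))
    (hfa : f a < c) (hfb : c < f b) : ∃! x, x ∈ Ioo a b ∧ f x = c := by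
  obtain ⟨x, hx, hfx⟩ := intermediate_value_Ioo hab hcont ⟨hfa, hfb⟩
  refine ⟨x, ⟨hx, hfx⟩, fun y ⟨hy, hfy⟩ => ?_⟩
  exact hmono.injOn (Ioo_subset_Icc_self hy) (Ioo_subset_Icc_self hx) (hfy.trans hfx.symm)

theorem log_four_mul_exp_one_div_nine_pos : 0 < log (4 * exp 1 / 9) := by
  have := exp_one_gt_d9
  exact log_pos (by rw [lt_div_iff₀ (by norm_num)]; linarith)

namespace RootRc

noncomputable def F (k r : ℝ) : ℝ := 2 * (1 + k) * r / (1 - r) + 2 * k * log (1 - r) - 1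

variable {k r : ℝ}

theorem F_one_third (k : ℝ) : F k (1 / 3) = k * log (4 * exp 1 / 9) := by
  have hlog : log (4 * exp 1 / 9) = 1 + 2 * log (2 / 3) := by
    rw [show 4 * exp 1 / 9 = exp 1 * (2 / 3) ^ 2 by ring, log_mul (exp_pos 1).ne' (by norm_num),
      log_exp, log_pow]
    push_cast; ring
  rw [F, hlog, show (1 : ℝ) - 1 / 3 = 2 / 3 by norm_num]
  ring

theorem hasDerivAt_F (k : ℝ) (hr : r ≠ 1) : HasDerivAt (F k) ((2 + 2 * k * r) / (1 - r) ^ 2) r := by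
  have hne : 1 - r ≠ 0 := sub_ne_zero.mpr hr.symm
  have hsub : HasDerivAt (fun r : ℝ => 1 - r) (-1) r := by
    simpa using (hasDerivAt_id r).const_sub 1
  have hlin : HasDerivAt (fun r : ℝ => 2 * (1 + k) * r) (2 * (1 + k)) r := by
    simpa using (hasDerivAt_id r).const_mul (2 * (1 + k))
  refine (((hlin.div hsub hne).add ((hsub.log hne).const_mul (2 * k))).sub_const 1).congr_deriv ?_
  field_simp
  ring

theorem continuousOn_F (k : ℝ) : ContinuousOn (F k) (Icc 0 (1 / 3)) :=
  fun _ hr => (hasDerivAt_F k (by linarith [hr.2])).continuousAt.continuousWithinAt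

theorem F_deriv_pos (hk : 0 ≤ k) (hr : r ∈ Icc (0 : ℝ) (1 / 3)) :
    0 < (2 + 2 * k * r) / (1 - r) ^ 2 := by
  have hkr : 0 ≤ k * r := mul_nonneg hk hr.1
  have hr1 : 0 < 1 - r := by linarith [hr.2]
  have hnum : 0 < 2 + 2 * k * r := by linarith
  positivity

theorem strictMonoOn_F (hk : 0 ≤ k) : StrictMonoOn (F k) (Icc 0 (1 / 3)) := by
  refine strictMonoOn_of_deriv_pos (convex_Icc _ _) (continuousOn_F k) fun r hr => ?_
  rw [interior_Icc] at hr
  rw [(hasDerivAt_F k (by linarith [hr.2])).deriv]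
  exact F_deriv_pos hk (Ioo_subset_Icc_self hr)

end RootRc

open RootRc

theorem unique_root_rc_general (k : ℝ) (hk0 : 0 < k) :
    (2*(1+k)*(0:ℝ)/(1-0) + 2*k*Real.log (1-0) - 1 = -1) ∧
    (2*(1+k)*(1/3:ℝ)/(1-1/3) + 2*k*Real.log (1-1/3) - 1
        = k * Real.log (4 * Real.exp 1 / 9)) ∧
    (0 < k * Real.log (4 * Real.exp 1 / 9)) ∧
    (∀ r ∈ Set.Icc (0:ℝ) (1/3),
        HasDerivAt (fun r : ℝ => 2*(1+k)*r/(1-r) + 2*k*Real.log (1-r) - 1)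
          ((2 + 2*k*r)/(1-r)^2) r ∧ 0 < (2 + 2*k*r)/(1-r)^2) ∧
    (∃! r : ℝ, r ∈ Set.Ioo (0:ℝ) (1/3) ∧
        2*(1+k)*r/(1-r) + 2*k*Real.log (1-r) = 1) := by
  have hF0 : F k 0 = -1 := by simp [F]
  have hpos : 0 < k * log (4 * exp 1 / 9) := mul_pos hk0 log_four_mul_exp_one_div_nine_pos
  refine ⟨hF0, F_one_third k, hpos,
    fun r hr => ⟨hasDerivAt_F k (by linarith [hr.2]), F_deriv_pos hk0.le hr⟩, ?_⟩
  have hroot := (strictMonoOn_F hk0.le).existsUnique_mem_Ioo_eq (c := 0) (by norm_num)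
    (continuousOn_F k) (by rw [hF0]; norm_num) (by rw [F_one_third]; exact hpos)
  simpa only [F, sub_eq_zero] using hroot

theorem unique_root_rc (k : ℝ) (hk0 : 0 < k) (hk1 : k ≤ 1) :
    (2*(1+k)*(0:ℝ)/(1-0) + 2*k*Real.log (1-0) - 1 = -1) ∧
    (2*(1+k)*(1/3:ℝ)/(1-1/3) + 2*k*Real.log (1-1/3) - 1
        = k * Real.log (4 * Real.exp 1 / 9)) ∧
    (0 < k * Real.log (4 * Real.exp 1 / 9)) ∧
    (∀ r ∈ Set.Icc (0:ℝ) (1/3),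
        HasDerivAt (fun r : ℝ => 2*(1+k)*r/(1-r) + 2*k*Real.log (1-r) - 1)
          ((2 + 2*k*r)/(1-r)^2) r ∧ 0 < (2 + 2*k*r)/(1-r)^2) ∧
    (∃! r : ℝ, r ∈ Set.Ioo (0:ℝ) (1/3) ∧
        2*(1+k)*r/(1-r) + 2*k*Real.log (1-r) = 1) :=
  unique_root_rc_general k hk0
end

section
/- For k ∈ (0,1], the equation r(1−k+2kr)/(1−r)^2 − k·ln(1−r) = 1/4 has a unique root r_s(k) in the interval (0,1/3). -/
theorem unique_root_rs (k : ℝ) (hk0 : 0 < k) (hk1 : k ≤ 1) :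
    ∃! r : ℝ, r ∈ Set.Ioo (0:ℝ) (1/3) ∧
      r*(1 - k + 2*k*r)/(1-r)^2 - k*Real.log (1-r) = 1/4 := by
  set f : ℝ → ℝ := fun r => r*(1 - k + 2*k*r)/(1-r)^2 - k*Real.log (1-r) with hf
  have hfm : StrictMonoOn f (Set.Icc 0 (1/3)) := by
    intro a ha b hb hab
    obtain ⟨ha0, ha1⟩ := ha
    obtain ⟨hb0, hb1⟩ := hb
    have hda : (0:ℝ) < (1-a)^2 := by nlinarith
    have hdb : (0:ℝ) < (1-b)^2 := by nlinarith
    have hlog : Real.log (1-b) < Real.log (1-a) :=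
      Real.log_lt_log (by linarith) (by linarith)
    have h2 : k * Real.log (1-b) < k * Real.log (1-a) :=
      mul_lt_mul_of_pos_left hlog hk0
    have hNa : 0 ≤ a*(1 - k + 2*k*a) := mul_nonneg ha0 (by nlinarith)
    have hNlt : a*(1 - k + 2*k*a) < b*(1 - k + 2*k*b) := by
      nlinarith [mul_nonneg (sub_pos.mpr hab).le (sub_nonneg.mpr hk1),
        mul_pos hk0 (mul_pos (sub_pos.mpr hab) (by linarith : (0:ℝ) < a + b))]
    have hDlt : (1-b)^2 < (1-a)^2 := by nlinarith
    have h1 : a*(1 - k + 2*k*a)/(1-a)^2 < b*(1 - k + 2*k*b)/(1-b)^2 := by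
      rw [div_lt_div_iff₀ hda hdb]
      nlinarith [mul_le_mul_of_nonneg_left hDlt.le hNa,
        mul_lt_mul_of_pos_right hNlt hda]
    simp only [hf]
    linarith
  have hc : ContinuousOn f (Set.Icc 0 (1/3)) := by
    apply ContinuousOn.sub
    · apply ContinuousOn.div (by fun_prop) (by fun_prop)
      intro x hx
      have := hx.2
      have : (0:ℝ) < (1-x)^2 := by nlinarith
      exact ne_of_gt this
    · apply ContinuousOn.mul continuousOn_const
      apply ContinuousOn.log (by fun_prop)
      intro x hx
      have := hx.2
      intro h
      nlinarith
  have hf0 : f 0 = 0 := by simp [hf]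
  have hf13 : f (1/3) = 3/4 - k/4 - k * Real.log (2/3) := by
    simp only [hf]
    norm_num
    ring
  have hlogneg : Real.log (2/3) < 0 := Real.log_neg (by norm_num) (by norm_num)
  have hklog : k * Real.log (2/3) < 0 := mul_neg_of_pos_of_neg hk0 hlogneg
  have hf13gt : (1:ℝ)/4 < f (1/3) := by rw [hf13]; linarith
  have hmem : (1:ℝ)/4 ∈ Set.Ioo (f 0) (f (1/3)) := by
    constructor
    · rw [hf0]; norm_num
    · exact hf13gt
  have hex := intermediate_value_Ioo (by norm_num : (0:ℝ) ≤ 1/3) hc hmem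
  obtain ⟨r, hr, hfr⟩ := hex
  refine ⟨r, ⟨hr, hfr⟩, ?_⟩
  rintro s ⟨hs, hfs⟩
  have hrI : r ∈ Set.Icc (0:ℝ) (1/3) := Set.mem_Icc_of_Ioo hr
  have hsI : s ∈ Set.Icc (0:ℝ) (1/3) := Set.mem_Icc_of_Ioo hs
  exact hfm.injOn hsI hrI (hfs.trans hfr.symm)
end

section
/- With Φ(λ,r) as above, Φ(1,r) = 5r³ − 9r² − 5r + 1; hence Φ(λ,r) ≥ 0 for all r ≤ r_* and λ ∈ (0,1], where r_* is the unique root of 5r³−9r²−5r+1 = 0 in (0,1/5). -/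
theorem Phi_nonneg (rstar : ℝ) (hstar : rstar ∈ Set.Ioo (0:ℝ) (1/5))
    (hroot : 5*rstar^3 - 9*rstar^2 - 5*rstar + 1 = 0)
    (huniq : ∀ r ∈ Set.Ioo (0:ℝ) (1/5), 5*r^3 - 9*r^2 - 5*r + 1 = 0 → r = rstar) :
    (∀ r : ℝ, 8*r^3*(1:ℝ)^2 - ((1-5*r)*(1-r^2) + 8*r^2*(1+r))*1 + 2*(1-5*r)*(1-r^2)
        = 5*r^3 - 9*r^2 - 5*r + 1) ∧
    ∀ r : ℝ, 0 ≤ r → r ≤ rstar → ∀ l ∈ Set.Ioc (0:ℝ) 1,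
      0 ≤ 8*r^3*l^2 - ((1-5*r)*(1-r^2) + 8*r^2*(1+r))*l + 2*(1-5*r)*(1-r^2) := by
  obtain ⟨hs0, hs5⟩ := hstar
  constructor
  · intro r; ring
  · intro r hr0 hrs l ⟨hl0, hl1⟩
    have hr5 : r < 1/5 := lt_of_le_of_lt hrs hs5
    -- Φ(1,r) = 5r³−9r²−5r+1 ≥ 0 on [0, rstar]
    have hg : 0 ≤ 5*r^3 - 9*r^2 - 5*r + 1 := by
      nlinarith [mul_nonneg (sub_nonneg.2 hrs)
        (by nlinarith : (0:ℝ) ≤ 5 + 9*(r+rstar) - 5*(r^2 + r*rstar + rstar^2)),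
        sq_nonneg r, sq_nonneg rstar]
    -- Φ(l,r) ≥ Φ(1,r)
    nlinarith [mul_nonneg (sub_nonneg.2 hl1)
      (by nlinarith [mul_nonneg hr0 hr0, mul_nonneg (mul_nonneg hr0 hr0) hr0] :
        (0:ℝ) ≤ (1-5*r)*(1-r^2) + 8*r^2*(1+r) - 8*r^3*(1+l)),
      hg]
end

section
/- For λ ∈ (0,1] and r ∈ (r_*, 1/5), where r_* is the unique root of 5r³−9r²−5r+1 in (0,1/5), one has ∂Φ/∂r (λ,r) = 24r²λ² − (39r² + 14r − 5)λ + 30r² − 4r − 10 < 0. -/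
/-! A convex quadratic in `l` is below its chord, so on `[0, 1]` it is negative as soon as it is
negative at `l = 0` and `l = 1`. For `∂Φ/∂r` these two values are `30r² - 4r - 10` and
`15r² - 18r - 5`, both negative for `0 < r < 1/5`. -/

theorem quadratic_neg_of_neg_at_zero_one {a b c x : ℝ} (ha : 0 ≤ a) (h0 : c < 0)
    (h1 : a + b + c < 0) (hx : x ∈ Set.Icc (0:ℝ) 1) : a * x ^ 2 + b * x + c < 0 := by
  obtain ⟨hx0, hx1⟩ := hx
  have hchord : a * x ^ 2 + b * x + c ≤ x * (a + b + c) + (1 - x) * c := by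
    nlinarith [mul_le_mul_of_nonneg_left (mul_le_of_le_one_left hx0 hx1) ha]
  rcases hx0.eq_or_lt with rfl | hx0
  · simpa using h0
  · nlinarith

theorem hasDerivAt_cubic (a b c d x : ℝ) :
    HasDerivAt (fun x => a * x ^ 3 + b * x ^ 2 + c * x + d) (3 * a * x ^ 2 + 2 * b * x + c) x :=
  ((((hasDerivAt_pow 3 x).const_mul a).add ((hasDerivAt_pow 2 x).const_mul b)).add
    ((hasDerivAt_id x).const_mul c)).add_const d |>.congr_deriv (by push_cast; ring)

def Phi (l r : ℝ) : ℝ :=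
  8*r^3*l^2 - ((1-5*r)*(1-r^2) + 8*r^2*(1+r))*l + 2*(1-5*r)*(1-r^2)

theorem hasDerivAt_Phi_right (l r : ℝ) :
    HasDerivAt (Phi l) (24*r^2*l^2 - (39*r^2 + 14*r - 5)*l + 30*r^2 - 4*r - 10) r := by
  have hcubic : Phi l = fun x => (8*l^2-13*l+10)*x^3 + (-7*l-2)*x^2 + (5*l-10)*x + (2-l) := by
    ext x; unfold Phi; ring
  rw [hcubic]
  exact (hasDerivAt_cubic _ _ _ _ r).congr_deriv (by ring)

theorem Phi_deriv_r_neg_general (rstar : ℝ) (hstar : rstar ∈ Set.Ioo (0:ℝ) (1/5))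
    (l r : ℝ) (hl : l ∈ Set.Ioc (0:ℝ) 1) (hr : r ∈ Set.Ioo rstar (1/5:ℝ)) :
    deriv (fun r : ℝ => 8*r^3*l^2 - ((1-5*r)*(1-r^2) + 8*r^2*(1+r))*l
        + 2*(1-5*r)*(1-r^2)) r
      = 24*r^2*l^2 - (39*r^2 + 14*r - 5)*l + 30*r^2 - 4*r - 10 ∧
    24*r^2*l^2 - (39*r^2 + 14*r - 5)*l + 30*r^2 - 4*r - 10 < 0 := by
  refine ⟨(hasDerivAt_Phi_right l r).deriv, ?_⟩
  have hr0 : 0 < r := hstar.1.trans hr.1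
  have hr5 : r < 1/5 := hr.2
  have hneg := quadratic_neg_of_neg_at_zero_one (a := 24*r^2) (b := -(39*r^2 + 14*r - 5))
    (c := 30*r^2 - 4*r - 10) (by positivity) (by nlinarith) (by nlinarith)
    (Set.Ioc_subset_Icc_self hl)
  linarith

theorem Phi_deriv_r_neg (rstar : ℝ) (hstar : rstar ∈ Set.Ioo (0:ℝ) (1/5))
    (hroot : 5*rstar^3 - 9*rstar^2 - 5*rstar + 1 = 0)
    (huniq : ∀ r ∈ Set.Ioo (0:ℝ) (1/5), 5*r^3 - 9*r^2 - 5*r + 1 = 0 → r = rstar)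
    (l r : ℝ) (hl : l ∈ Set.Ioc (0:ℝ) 1) (hr : r ∈ Set.Ioo rstar (1/5:ℝ)) :
    deriv (fun r : ℝ => 8*r^3*l^2 - ((1-5*r)*(1-r^2) + 8*r^2*(1+r))*l
        + 2*(1-5*r)*(1-r^2)) r
      = 24*r^2*l^2 - (39*r^2 + 14*r - 5)*l + 30*r^2 - 4*r - 10 ∧
    24*r^2*l^2 - (39*r^2 + 14*r - 5)*l + 30*r^2 - 4*r - 10 < 0 :=
  Phi_deriv_r_neg_general rstar hstar l r hl hr
end

section
/- Let ω be an analytic self-map of the unit disk with Taylor coefficients cₙ (n ≥ 0). Then Σ_{n≥1} n|cₙ| rⁿ + Σ_{n≥0} |cₙ| rⁿ ≤ 1 for all 0 ≤ r ≤ 1 − √(2/3). -/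
/-!
Choose `μ` with `‖μ‖ = 1` and `μ c₀ = ‖c₀‖`. Then `P = 1 - μ ω` has nonnegative real part, and
Carathéodory's inequality `‖pₙ‖ ≤ 2 Re p₀` for its coefficients gives `‖cₙ‖ ≤ 2 (1 - ‖c₀‖)`
for `n ≥ 1`. Hence the sum is at most `‖c₀‖ + 2 (1 - ‖c₀‖) ∑_{n ≥ 1} (n + 1) rⁿ
= ‖c₀‖ + 2 (1 - ‖c₀‖) ((1 - r)⁻² - 1)`, and `(1 - r)⁻² - 1 ≤ 1/2` iff `r ≤ 1 - √(2/3)`.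

Carathéodory's inequality is proved by a discrete Herglotz argument. Averaging
`P(r ζʲ) ζ^{jq}` over the `N`-th roots of unity `ζʲ` picks out the terms `pₖ rᵏ` with
`k ≡ -q (mod N)`. Since `Re P ≥ 0`, the average of `2 Re P(r ζʲ) ζ^{-jn}` is at most that of
`2 Re P(r ζʲ)`; as `N → ∞` the two averages tend to `pₙ rⁿ` and `2 Re p₀`, and then `r → 1`.
-/

open Filter Topology Finset ComplexConjugate

section RootsOfUnity

variable {K : Type*} [Field K]

theorem IsPrimitiveRoot.sum_zpow_mul_eq_ite {ζ : K} {N : ℕ} (hζ : IsPrimitiveRoot ζ N)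
    (m : ℤ) : ∑ j ∈ range N, ζ ^ ((j : ℤ) * m) = if (N : ℤ) ∣ m then (N : K) else 0 := by
  have hpow (j : ℕ) : ζ ^ ((j : ℤ) * m) = (ζ ^ m) ^ j := by
    rw [mul_comm, zpow_mul, zpow_natCast]
  simp only [hpow]
  split_ifs with h
  · simp [(hζ.zpow_eq_one_iff_dvd m).2 h]
  · have hne : ζ ^ m ≠ 1 := mt (hζ.zpow_eq_one_iff_dvd m).1 h
    rw [geom_sum_eq hne, ← zpow_natCast, ← zpow_mul, mul_comm, zpow_mul, zpow_natCast,
      hζ.pow_eq_one, one_zpow, sub_self, zero_div]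

variable [TopologicalSpace K] [IsTopologicalRing K]

theorem IsPrimitiveRoot.hasSum_sum_mul_zpow {ζ : K} {N : ℕ} (hζ : IsPrimitiveRoot ζ N)
    (hN : N ≠ 0) {p : ℕ → K} {P : K → K} {z : K}
    (hP : ∀ j, HasSum (fun k => p k * (z * ζ ^ j) ^ k) (P (z * ζ ^ j))) (q : ℤ) :
    HasSum (fun k : ℕ => if (N : ℤ) ∣ k + q then N * (p k * z ^ k) else 0)
      (∑ j ∈ range N, P (z * ζ ^ j) * ζ ^ ((j : ℤ) * q)) := by
  have hζ0 : ζ ≠ 0 := hζ.ne_zero hN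
  refine (hasSum_sum fun j _ => (hP j).mul_right (ζ ^ ((j : ℤ) * q))).congr_fun fun k => ?_
  have hterm (j : ℕ) : p k * (z * ζ ^ j) ^ k * ζ ^ ((j : ℤ) * q)
      = p k * z ^ k * ζ ^ ((j : ℤ) * (k + q)) := by
    rw [mul_add, zpow_add₀ hζ0, ← Nat.cast_mul, zpow_natCast, mul_pow, ← pow_mul, mul_comm j k]
    ring
  simp only [hterm, ← mul_sum, hζ.sum_zpow_mul_eq_ite]
  split_ifs <;> ring

end RootsOfUnity

noncomputable def residueClassSum {E : Type*} [AddCommGroup E] [TopologicalSpace E] (a : ℕ → E)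
    (N : ℕ) (q : ℤ) : E :=
  ∑' k : ℕ, if (N : ℤ) ∣ k + q then a k else 0

theorem tendsto_residueClassSum {E : Type*} [NormedAddCommGroup E] [CompleteSpace E]
    {a : ℕ → E} (ha : Summable fun k => ‖a k‖) (q : ℤ) :
    Tendsto (fun N => residueClassSum a N q) atTop
      (𝓝 (∑' k : ℕ, if (k : ℤ) + q = 0 then a k else 0)) := by
  refine tendsto_tsum_of_dominated_convergence ha (fun k => ?_)
    (Eventually.of_forall fun N k => ?_)
  · refine tendsto_const_nhds.congr' ?_
    filter_upwards [eventually_gt_atTop ((k : ℤ) + q).natAbs] with N hN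
    have hdvd : (N : ℤ) ∣ k + q ↔ (k : ℤ) + q = 0 :=
      ⟨fun h => Int.eq_zero_of_abs_lt_dvd h (by rw [Int.abs_eq_natAbs]; omega),
        fun h => h ▸ dvd_zero _⟩
    simp only [hdvd]
  · split_ifs <;> simp

theorem summable_norm_mul_pow_of_summable {𝕜 : Type*} [NormedField 𝕜] {p : ℕ → 𝕜} {z : 𝕜}
    (hz : Summable fun k => p k * z ^ k) {r : ℝ} (hr0 : 0 ≤ r) (hr : r < ‖z‖) :
    Summable fun k => ‖p k‖ * r ^ k := by
  have hz0 : ‖z‖ ≠ 0 := (hr0.trans_lt hr).ne'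
  have hbdd : (fun k => ‖p k * z ^ k‖) =O[atTop] (fun _ => (1 : ℝ)) :=
    hz.tendsto_atTop_zero.norm.isBigO_one ℝ
  refine summable_of_isBigO_nat (summable_geometric_of_lt_one (by positivity)
    ((div_lt_one (hr0.trans_lt hr)).2 hr)) ?_
  refine (hbdd.mul (Asymptotics.isBigO_refl (fun k => (r / ‖z‖) ^ k) atTop)).congr
    (fun k => ?_) (fun k => one_mul _)
  rw [norm_mul, norm_pow, div_pow]
  field_simp

theorem norm_sum_mul_add_conj_sum_mul_le {ι : Type*} (s : Finset ι) {x u v : ι → ℂ}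
    (hx : ∀ j ∈ s, 0 ≤ (x j).re) (hu : ∀ j ∈ s, ‖u j‖ ≤ 1) (huv : ∀ j ∈ s, conj (v j) = u j) :
    ‖∑ j ∈ s, x j * u j + conj (∑ j ∈ s, x j * v j)‖ ≤ 2 * (∑ j ∈ s, x j).re := by
  have hsum : ∑ j ∈ s, x j * u j + conj (∑ j ∈ s, x j * v j)
      = ∑ j ∈ s, ((2 * (x j).re : ℝ) : ℂ) * u j := by
    rw [map_sum, ← sum_add_distrib]
    refine sum_congr rfl fun j hj => ?_
    rw [map_mul, huv j hj, Complex.ofReal_mul, Complex.re_eq_add_conj]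
    push_cast; ring
  rw [hsum, Complex.re_sum, mul_sum]
  refine (norm_sum_le _ _).trans (sum_le_sum fun j hj => ?_)
  rw [norm_mul, Complex.norm_real, Real.norm_of_nonneg (by linarith [hx j hj])]
  exact mul_le_of_le_one_right (by linarith [hx j hj]) (hu j hj)

section Caratheodory

variable {p : ℕ → ℂ} {P : ℂ → ℂ}
  (hP : ∀ z ∈ Metric.ball (0 : ℂ) 1, HasSum (fun k => p k * z ^ k) (P z))
  (hre : ∀ z ∈ Metric.ball (0 : ℂ) 1, 0 ≤ (P z).re)
include hP hre

-- `N * residueClassSum _ N q` is the average `∑ⱼ P(r ζʲ) ζ^{jq}` over the `N`-th roots of unity.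
theorem norm_residueClassSum_neg_add_conj_le {r : ℝ} (hr0 : 0 ≤ r) (hr1 : r < 1) {N : ℕ}
    (hN : N ≠ 0) (n : ℕ) :
    ‖residueClassSum (fun k => p k * (r : ℂ) ^ k) N (-n)
        + conj (residueClassSum (fun k => p k * (r : ℂ) ^ k) N n)‖
      ≤ 2 * (residueClassSum (fun k => p k * (r : ℂ) ^ k) N 0).re := by
  set ζ := Complex.exp (2 * Real.pi * Complex.I / N)
  have hζ : IsPrimitiveRoot ζ N := Complex.isPrimitiveRoot_exp N hN
  have hζ1 : ‖ζ‖ = 1 := hζ.norm'_eq_one hN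
  have hball (j : ℕ) : (r : ℂ) * ζ ^ j ∈ Metric.ball (0 : ℂ) 1 := by
    simpa [hζ1, abs_of_nonneg hr0] using hr1
  have hG (q : ℤ) : (N : ℂ) * residueClassSum (fun k => p k * (r : ℂ) ^ k) N q
      = ∑ j ∈ range N, P (r * ζ ^ j) * ζ ^ ((j : ℤ) * q) := by
    rw [← (hζ.hasSum_sum_mul_zpow hN (fun j => hP _ (hball j)) q).tsum_eq, residueClassSum,
      ← tsum_mul_left]
    simp only [mul_ite, mul_zero]
  have hG0 := hG 0
  simp only [mul_zero, zpow_zero, mul_one] at hG0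
  have := norm_sum_mul_add_conj_sum_mul_le (range N) (x := fun j => P (r * ζ ^ j))
    (u := fun j => ζ ^ ((j : ℤ) * (-n))) (v := fun j => ζ ^ ((j : ℤ) * n))
    (fun j _ => hre _ (hball j)) (fun j _ => by simp [hζ1])
    (fun j _ => by rw [map_zpow₀, ← Complex.inv_eq_conj hζ1, inv_zpow', mul_neg])
  rwa [← hG, ← hG, ← hG0, map_mul, Complex.conj_natCast, ← mul_add, norm_mul,
    Complex.norm_natCast, ← Complex.ofReal_natCast, Complex.re_ofReal_mul, ← mul_left_comm,
    mul_le_mul_iff_right₀ (by positivity)] at this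

theorem norm_coeff_mul_pow_le_two_mul_re_coeff_zero {n : ℕ} (hn : n ≠ 0) {r : ℝ} (hr0 : 0 ≤ r)
    (hr1 : r < 1) : ‖p n‖ * r ^ n ≤ 2 * (p 0).re := by
  set a : ℕ → ℂ := fun k => p k * (r : ℂ) ^ k
  have ha : Summable fun k => ‖a k‖ := by
    obtain ⟨σ, hrσ, hσ1⟩ := exists_between hr1
    have hσ : (σ : ℂ) ∈ Metric.ball (0 : ℂ) 1 := by
      simpa [abs_of_pos (hr0.trans_lt hrσ)] using hσ1
    refine (summable_norm_mul_pow_of_summable (hP _ hσ).summable hr0 ?_).congr fun k => ?_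
    · simpa [abs_of_pos (hr0.trans_lt hrσ)] using hrσ
    · simp [a, abs_of_nonneg hr0]
  have hlim0 : ∑' k : ℕ, (if (k : ℤ) + 0 = 0 then a k else 0) = a 0 := by simp
  have hlim_neg : ∑' k : ℕ, (if (k : ℤ) + -n = 0 then a k else 0) = a n := by
    simp only [add_neg_eq_zero, Nat.cast_inj]
    exact tsum_ite_eq n a
  have hlim_pos : ∑' k : ℕ, (if (k : ℤ) + n = 0 then a k else 0) = 0 := by
    have hne (k : ℕ) : (k : ℤ) + n ≠ 0 := by omega
    simp [hne]
  have hL := ((tendsto_residueClassSum ha (-n)).add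
    ((Complex.continuous_conj.tendsto _).comp (tendsto_residueClassSum ha n))).norm
  have hR := ((Complex.continuous_re.tendsto _).comp (tendsto_residueClassSum ha 0)).const_mul 2
  rw [hlim_neg, hlim_pos, map_zero, add_zero] at hL
  rw [hlim0] at hR
  have hbound : ‖a n‖ ≤ 2 * (a 0).re := le_of_tendsto_of_tendsto hL hR <|
    (eventually_ne_atTop 0).mono fun N hN =>
      norm_residueClassSum_neg_add_conj_le hP hre hr0 hr1 hN n
  simpa [a, abs_of_nonneg hr0] using hbound

theorem norm_coeff_le_two_mul_re_coeff_zero {n : ℕ} (hn : n ≠ 0) : ‖p n‖ ≤ 2 * (p 0).re := by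
  have hlim : Tendsto (fun r : ℝ => ‖p n‖ * r ^ n) (𝓝[<] 1) (𝓝 ‖p n‖) := by
    simpa using (((continuous_pow n).tendsto (1 : ℝ)).const_mul ‖p n‖).mono_left
      nhdsWithin_le_nhds
  refine le_of_tendsto hlim ?_
  filter_upwards [Ioo_mem_nhdsLT zero_lt_one] with r hr
  exact norm_coeff_mul_pow_le_two_mul_re_coeff_zero hP hre hn hr.1.le hr.2

end Caratheodory

theorem norm_coeff_le_two_mul_one_sub_norm_coeff_zero {w : ℂ → ℂ} {c : ℕ → ℂ}
    (hw : ∀ z ∈ Metric.ball (0 : ℂ) 1, HasSum (fun n => c n * z ^ n) (w z))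
    (hb : ∀ z ∈ Metric.ball (0 : ℂ) 1, ‖w z‖ ≤ 1) {n : ℕ} (hn : n ≠ 0) :
    ‖c n‖ ≤ 2 * (1 - ‖c 0‖) := by
  set μ := Complex.exp (-(c 0).arg * Complex.I)
  have hμ : ‖μ‖ = 1 := by simpa [μ] using Complex.norm_exp_ofReal_mul_I (-(c 0).arg)
  have hμc : μ * c 0 = ‖c 0‖ := by
    conv_lhs => rw [← Complex.norm_mul_exp_arg_mul_I (c 0)]
    rw [mul_left_comm, ← Complex.exp_add, neg_mul, neg_add_cancel, Complex.exp_zero, mul_one]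
  have hP : ∀ z ∈ Metric.ball (0 : ℂ) 1, HasSum
      (fun k => ((if k = 0 then 1 else 0) - μ * c k) * z ^ k) (1 - μ * w z) := by
    intro z hz
    refine ((hasSum_ite_eq 0 (1 : ℂ)).sub ((hw z hz).mul_left μ)).congr_fun fun k => ?_
    split_ifs with hk <;> simp [hk, mul_assoc]
  have hre : ∀ z ∈ Metric.ball (0 : ℂ) 1, 0 ≤ (1 - μ * w z).re := by
    intro z hz
    have := (Complex.re_le_norm (μ * w z)).trans (by simpa [hμ] using hb z hz)
    simp only [Complex.sub_re, Complex.one_re]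
    linarith
  simpa [hn, hμ, hμc] using norm_coeff_le_two_mul_re_coeff_zero hP hre hn

theorem tsum_succ_mul_add_tsum_le_one {b : ℕ → ℝ} (hb0 : ∀ n, 0 ≤ b n)
    (hb : ∀ n, b (n + 1) ≤ 2 * (1 - b 0)) {r : ℝ} (hr0 : 0 ≤ r) (hr : r ≤ 1 - √(2 / 3)) :
    (∑' n : ℕ, ((n : ℝ) + 1) * b (n + 1) * r ^ (n + 1)) + ∑' n : ℕ, b n * r ^ n ≤ 1 := by
  set K := 2 * (1 - b 0)
  have hK : 0 ≤ K := (hb0 1).trans (hb 0)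
  have hsqrt : 0 < √(2 / 3) := by positivity
  have hr1 : r < 1 := by linarith
  have h23 : 2 / 3 ≤ (1 - r) ^ 2 := by
    calc (2 / 3 : ℝ) = √(2 / 3) ^ 2 := (Real.sq_sqrt (by norm_num)).symm
      _ ≤ (1 - r) ^ 2 := by gcongr; linarith
  have hgeom : HasSum (fun n : ℕ => ((n : ℝ) + 2) * r ^ (n + 1)) (((1 - r) ^ 2)⁻¹ - 1) := by
    have := hasSum_choose_mul_geometric_of_norm_lt_one 1
      (show ‖r‖ < 1 by rwa [Real.norm_of_nonneg hr0])
    have htail := (hasSum_nat_add_iff' 1).2 this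
    norm_num at htail
    exact htail.congr_fun fun n => by ring
  have hgeom_le : ((1 - r) ^ 2)⁻¹ - 1 ≤ 1 / 2 := by
    have := inv_anti₀ (by norm_num) h23
    norm_num at this
    linarith
  have hterm (n : ℕ) : ((n : ℝ) + 1) * b (n + 1) * r ^ (n + 1) + b (n + 1) * r ^ (n + 1)
      ≤ K * (((n : ℝ) + 2) * r ^ (n + 1)) := by
    have := mul_le_mul_of_nonneg_right (hb n) (by positivity : 0 ≤ ((n : ℝ) + 2) * r ^ (n + 1))
    linarith
  have hnonneg (n : ℕ) : 0 ≤ b (n + 1) * r ^ (n + 1) := mul_nonneg (hb0 _) (by positivity)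
  have hnonneg' (n : ℕ) : 0 ≤ ((n : ℝ) + 1) * b (n + 1) * r ^ (n + 1) := by
    rw [mul_assoc]; exact mul_nonneg (by positivity) (hnonneg n)
  have hS1 : Summable fun n : ℕ => ((n : ℝ) + 1) * b (n + 1) * r ^ (n + 1) :=
    (hgeom.summable.mul_left K).of_nonneg_of_le hnonneg'
      fun n => by linarith [hterm n, hnonneg n]
  have hS2 : Summable fun n : ℕ => b (n + 1) * r ^ (n + 1) :=
    (hgeom.summable.mul_left K).of_nonneg_of_le hnonneg
      fun n => by linarith [hterm n, hnonneg' n]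
  calc (∑' n : ℕ, ((n : ℝ) + 1) * b (n + 1) * r ^ (n + 1)) + ∑' n : ℕ, b n * r ^ n
      = b 0 + ∑' n : ℕ, (((n : ℝ) + 1) * b (n + 1) * r ^ (n + 1) + b (n + 1) * r ^ (n + 1)) := by
        rw [((summable_nat_add_iff (f := fun n => b n * r ^ n) 1).1 hS2).tsum_eq_zero_add,
          hS1.tsum_add hS2]
        simp only [pow_zero, mul_one]
        ring
    _ ≤ b 0 + K * (((1 - r) ^ 2)⁻¹ - 1) := by
        rw [← hgeom.tsum_eq, ← tsum_mul_left]
        gcongr _ + ?_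
        exact (hS1.add hS2).tsum_le_tsum hterm (hgeom.summable.mul_left K)
    _ ≤ b 0 + K * (1 / 2) := by gcongr
    _ = 1 := by ring

theorem majorant_zderiv_plus_self (w : ℂ → ℂ) (c : ℕ → ℂ)
    (hw : ∀ z ∈ Metric.ball (0:ℂ) 1, HasSum (fun n : ℕ => c n * z ^ n) (w z))
    (hb : ∀ z ∈ Metric.ball (0:ℂ) 1, ‖w z‖ ≤ 1)
    (r : ℝ) (hr0 : 0 ≤ r) (hr1 : r ≤ 1 - Real.sqrt (2/3)) :
    (∑' n : ℕ, ((n:ℝ)+1) * ‖c (n+1)‖ * r ^ (n+1)) +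
      ∑' n : ℕ, ‖c n‖ * r ^ n ≤ 1 :=
  tsum_succ_mul_add_tsum_le_one (fun n => norm_nonneg (c n))
    (fun n => norm_coeff_le_two_mul_one_sub_norm_coeff_zero hw hb n.succ_ne_zero) hr0 hr1
end
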